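/- arXiv:1902.05944 — 2 statements merged into one kernel-verified Lean document; each statement's English description precedes it below -/
import Mathlib

section
/- For every integer n ≥ 2, F_{n+2}^3 - 3·F_n^3 + F_{n-2}^3 = 3·F_{3n}. -/
/-!
Extended to all of `ℤ`, both sides become cubic forms in `a = F_{n-1}` and `b = F_n`: the addition
formula gives `F_{3n} = F_{n+1}^3 + F_n^3 - F_{n-1}^3`, and with `F_{n+1} = a + b`,
`F_{n+2} = a + 2b`, `F_{n-2} = b - a` both sides equal `3 (3a²b + 3ab² + 2b³)`.
-/

namespace Int

theorem fib_sub_one_add_fib (n : ℤ) : fib (n - 1) + fib n = fib (n + 1) := by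
  have h := fib_add_two (n - 1)
  rwa [sub_add_cancel, show n - 1 + 2 = n + 1 by ring, eq_comm] at h

theorem fib_three_mul (n : ℤ) :
    fib (3 * n) = fib (n + 1) ^ 3 + fib n ^ 3 - fib (n - 1) ^ 3 := by
  rw [show 3 * n = n + 2 * n by ring, fib_add, fib_two_mul, fib_two_mul_add_one,
    ← fib_sub_one_add_fib]
  ring

theorem fib_add_two_pow_three_sub_three_mul_fib_pow_three_add (n : ℤ) :
    fib (n + 2) ^ 3 - 3 * fib n ^ 3 + fib (n - 2) ^ 3 = 3 * fib (3 * n) := by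
  have h_sub_two : fib (n - 2) + fib (n - 1) = fib n := by
    simpa [sub_sub, show (1 : ℤ) + 1 = 2 by norm_num] using fib_sub_one_add_fib (n - 1)
  rw [fib_three_mul, fib_add_two, ← fib_sub_one_add_fib, ← h_sub_two]
  ring

end Int

theorem stmt_4 (n : ℕ) (hn : 2 ≤ n) :
    (Nat.fib (n + 2) : ℤ) ^ 3 - 3 * (Nat.fib n : ℤ) ^ 3 + (Nat.fib (n - 2) : ℤ) ^ 3 =
      3 * Nat.fib (3 * n) := by
  simpa [← Int.fib_natCast, Nat.cast_sub hn] using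
    Int.fib_add_two_pow_three_sub_three_mul_fib_pow_three_add n
end

section
/- For every integer n ≥ 1, 10·∑_{k=1}^{n} F_k·F_{k+2}·F_{k+4} = F_{3n+8} + (-1)^{n+1}·16·F_{n+1} - 5. -/
lemma cassini (m : ℕ) :
    (Nat.fib (m+1) : ℤ)^2 - Nat.fib m * Nat.fib (m+1) - (Nat.fib m : ℤ)^2 = (-1)^m := by
  induction m with
  | zero => simp
  | succ m ih =>
    have h : (Nat.fib (m+1+1) : ℤ) = Nat.fib m + Nat.fib (m+1) := by
      rw [show m+1+1 = m+2 by ring]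
      push_cast [Nat.fib_add_two]; ring
    rw [pow_succ]
    linear_combination h * ((Nat.fib (m+1+1):ℤ) + Nat.fib m) - ih

lemma key (m : ℕ) :
    10 * (Nat.fib (m+1) : ℤ) * Nat.fib (m+3) * Nat.fib (m+5) =
      (Nat.fib (3*m+11) : ℤ) - Nat.fib (3*m+8) + (-1)^m * 16 * Nat.fib (m+3) := by
  have A : Nat.fib (3*m+8) = Nat.fib m * Nat.fib (2*m+7) + Nat.fib (m+1) * Nat.fib (2*m+8) := by
    rw [show 3*m+8 = m+(2*m+7)+1 by ring, Nat.fib_add, show 2*m+7+1 = 2*m+8 by ring]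
  have B : Nat.fib (3*m+11) = Nat.fib m * Nat.fib (2*m+10) + Nat.fib (m+1) * Nat.fib (2*m+11) := by
    rw [show 3*m+11 = m+(2*m+10)+1 by ring, Nat.fib_add, show 2*m+10+1 = 2*m+11 by ring]
  have C : Nat.fib (2*m+7) = Nat.fib m * Nat.fib (m+6) + Nat.fib (m+1) * Nat.fib (m+7) := by
    rw [show 2*m+7 = m+(m+6)+1 by ring, Nat.fib_add, show m+6+1 = m+7 by ring]
  have D : Nat.fib (2*m+8) = Nat.fib m * Nat.fib (m+7) + Nat.fib (m+1) * Nat.fib (m+8) := by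
    rw [show 2*m+8 = m+(m+7)+1 by ring, Nat.fib_add, show m+7+1 = m+8 by ring]
  have E : Nat.fib (2*m+10) = Nat.fib m * Nat.fib (m+9) + Nat.fib (m+1) * Nat.fib (m+10) := by
    rw [show 2*m+10 = m+(m+9)+1 by ring, Nat.fib_add, show m+9+1 = m+10 by ring]
  have F : Nat.fib (2*m+11) = Nat.fib m * Nat.fib (m+10) + Nat.fib (m+1) * Nat.fib (m+11) := by
    rw [show 2*m+11 = m+(m+10)+1 by ring, Nat.fib_add, show m+10+1 = m+11 by ring]
  have fe : ∀ k : ℕ, Nat.fib (m + (k+2)) = Nat.fib (m + k) + Nat.fib (m + (k+1)) := by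
    intro k
    rw [show m + (k+2) = (m+k) + 2 by ring, Nat.fib_add_two, show m+k+1 = m+(k+1) by ring]
  have f2 := fe 0; have f3 := fe 1; have f4 := fe 2; have f5 := fe 3
  have f6 := fe 4; have f7 := fe 5; have f8 := fe 6; have f9 := fe 7
  have f10 := fe 8; have f11 := fe 9
  norm_num at f2 f3 f4 f5 f6 f7 f8 f9 f10 f11
  rw [A, B, C, D, E, F, f11, f10, f9, f8, f7, f6, f5, f4, f3, f2]
  push_cast
  linear_combination (16 * ((Nat.fib m : ℤ) + 2 * Nat.fib (m+1))) * cassini m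

theorem stmt_9 (n : ℕ) (hn : 1 ≤ n) :
    10 * ∑ k ∈ Finset.Icc 1 n, (Nat.fib k : ℤ) * Nat.fib (k + 2) * Nat.fib (k + 4) =
      (Nat.fib (3 * n + 8) : ℤ) + (-1) ^ (n + 1) * 16 * Nat.fib (n + 1) - 5 := by
  induction n with
  | zero => omega
  | succ n ih =>
    rcases Nat.eq_zero_or_pos n with h0 | h1
    · subst h0
      norm_num [Finset.Icc_self]
    · rw [Finset.sum_Icc_succ_top (by omega : 1 ≤ n + 1), mul_add, ih h1]
      have hk := key n
      rw [show 3 * (n+1) + 8 = 3*n + 11 by ring]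
      have hcd : (Nat.fib (n+1+2) : ℤ) = Nat.fib n + 2 * Nat.fib (n+1) := by
        rw [show n+1+2 = (n+1)+2 by ring, Nat.fib_add_two, Nat.fib_add_two]
        push_cast; ring
      have hsign : ((-1:ℤ))^(n+1+1) = (-1)^n := by ring
      have hsign2 : ((-1:ℤ))^(n+1) = -(-1)^n := by ring
      have hf : (Nat.fib (n+1+1) : ℤ) = Nat.fib n + Nat.fib (n+1) := by
        rw [show n+1+1 = n+2 by ring, Nat.fib_add_two]; push_cast; ring
      rw [hsign, hsign2]
      linear_combination hk + (16*(-1:ℤ)^n) * hcd - (16*(-1:ℤ)^n) * hf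
end
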